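/- arXiv:2005.08190 — 7 statements merged into one kernel-verified Lean document; each statement's English description precedes it below -/
import Mathlib

section
/- For every 1 < i ≤ m, DR[i,1].U = (a_i − b_1)^2, and for every 1 < j ≤ n, DR[1,j].L = (a_1 − b_j)^2. Moreover, for every 2 ≤ i ≤ m and 2 ≤ j ≤ n, letting z = min{DR[i−1,j].L, DR[i,j−1].U, 0} + (a_i − b_j)^2, one has DR[i,j].U = z − DR[i−1,j].L and DR[i,j].L = z − DR[i,j−1].U. -/
/-- The DTW dynamic programming table recurrence for sequences `a` (length `m`)
and `b` (length `n`), both indexed from 1. -/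
def DTWTable (a b : ℕ → ℝ) (m n : ℕ) (D : ℕ → ℕ → ℝ) : Prop :=
  D 1 1 = (a 1 - b 1) ^ 2 ∧
  (∀ i, 1 < i → i ≤ m → D i 1 = D (i - 1) 1 + (a i - b 1) ^ 2) ∧
  (∀ j, 1 < j → j ≤ n → D 1 j = D 1 (j - 1) + (a 1 - b j) ^ 2) ∧
  (∀ i j, 1 < i → i ≤ m → 1 < j → j ≤ n →
    D i j = min (min (D i (j - 1)) (D (i - 1) j)) (D (i - 1) (j - 1)) + (a i - b j) ^ 2)

/- Every entry of the DTW table is its diagonal predecessor plus a quantity depending only on the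
two differences across the cell; the identities of the theorem are this decomposition read off
against the upper and left neighbours. -/

lemma min_min_sub_eq_min_min_sub {α : Type*} [AddCommGroup α] [LinearOrder α]
    [IsOrderedAddMonoid α] (l u c : α) :
    min (min (u - c) (l - c)) 0 = min (min l u) c - c := by
  rw [min_sub_sub_right, ← sub_self c, min_sub_sub_right, min_comm u]

namespace DTWTable

variable {a b : ℕ → ℝ} {m n : ℕ} {D : ℕ → ℕ → ℝ} {i j : ℕ}

lemma sub_first_col (hD : DTWTable a b m n D) (hi : 1 < i) (him : i ≤ m) :
    D i 1 - D (i - 1) 1 = (a i - b 1) ^ 2 := by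
  rw [hD.2.1 i hi him]; ring

lemma sub_first_row (hD : DTWTable a b m n D) (hj : 1 < j) (hjn : j ≤ n) :
    D 1 j - D 1 (j - 1) = (a 1 - b j) ^ 2 := by
  rw [hD.2.2.1 j hj hjn]; ring

lemma eq_diag_add (hD : DTWTable a b m n D) (hi : 1 < i) (him : i ≤ m) (hj : 1 < j)
    (hjn : j ≤ n) :
    D i j = D (i - 1) (j - 1) +
      (min (min (D (i - 1) j - D (i - 1) (j - 1)) (D i (j - 1) - D (i - 1) (j - 1))) 0 +
        (a i - b j) ^ 2) := by
  rw [hD.2.2.2 i j hi him hj hjn, min_min_sub_eq_min_min_sub]; ring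

end DTWTable

theorem stmt_1_general (a b : ℕ → ℝ) (m n : ℕ) (hm : 1 ≤ m) (hn : 1 ≤ n)
    (D : ℕ → ℕ → ℝ) (hD : DTWTable a b m n D)
    (U L : ℕ → ℕ → ℝ)
    (hU : ∀ i j, 2 ≤ i → i ≤ m → 1 ≤ j → j ≤ n → U i j = D i j - D (i - 1) j)
    (hL : ∀ i j, 1 ≤ i → i ≤ m → 2 ≤ j → j ≤ n → L i j = D i j - D i (j - 1)) :
    (∀ i, 1 < i → i ≤ m → U i 1 = (a i - b 1) ^ 2) ∧
    (∀ j, 1 < j → j ≤ n → L 1 j = (a 1 - b j) ^ 2) ∧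
    (∀ i j, 2 ≤ i → i ≤ m → 2 ≤ j → j ≤ n →
      U i j = (min (min (L (i - 1) j) (U i (j - 1))) 0 + (a i - b j) ^ 2) - L (i - 1) j ∧
      L i j = (min (min (L (i - 1) j) (U i (j - 1))) 0 + (a i - b j) ^ 2) - U i (j - 1)) := by
  refine ⟨fun i hi him => ?_, fun j hj hjn => ?_, fun i j hi him hj hjn => ?_⟩
  · rw [hU i 1 hi him le_rfl hn, hD.sub_first_col hi him]
  · rw [hL 1 j le_rfl hm hj hjn, hD.sub_first_row hj hjn]
  · have hDij := hD.eq_diag_add hi him hj hjn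
    rw [hU i j hi him (by omega) hjn, hL i j (by omega) him hj hjn,
      hL (i - 1) j (by omega) (by omega) hj hjn, hU i (j - 1) hi him (by omega) (by omega)]
    constructor <;> linarith

theorem stmt_1 (a b : ℕ → ℝ) (m n : ℕ) (hm : 1 ≤ m) (hn : 1 ≤ n)
    (D : ℕ → ℕ → ℝ) (hD : DTWTable a b m n D)
    (U L : ℕ → ℕ → ℝ)
    (hU : ∀ i j, 2 ≤ i → i ≤ m → 1 ≤ j → j ≤ n → U i j = D i j - D (i - 1) j)
    (hU1 : ∀ j, 1 ≤ j → j ≤ n → U 1 j = 0)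
    (hL : ∀ i j, 1 ≤ i → i ≤ m → 2 ≤ j → j ≤ n → L i j = D i j - D i (j - 1))
    (hL1 : ∀ i, 1 ≤ i → i ≤ m → L i 1 = 0) :
    (∀ i, 1 < i → i ≤ m → U i 1 = (a i - b 1) ^ 2) ∧
    (∀ j, 1 < j → j ≤ n → L 1 j = (a 1 - b j) ^ 2) ∧
    (∀ i j, 2 ≤ i → i ≤ m → 2 ≤ j → j ≤ n →
      U i j = (min (min (L (i - 1) j) (U i (j - 1))) 0 + (a i - b j) ^ 2) - L (i - 1) j ∧
      L i j = (min (min (L (i - 1) j) (U i (j - 1))) 0 + (a i - b j) ^ 2) - U i (j - 1)) :=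
  stmt_1_general a b m n hm hn D hD U L hU hL
end

section
/- Let 2 ≤ i ≤ m and 2 ≤ j ≤ min(n, n′), and suppose b_j = b′_j. If DR[i,j].U ≠ DR′[i,j].U or DR[i,j].L ≠ DR′[i,j].L, then DR[i,j−1].U ≠ DR′[i,j−1].U or DR[i−1,j].L ≠ DR′[i−1,j].L. -/
lemma min_min_sub_eq_of_sub_eq {α : Type*} [AddCommGroup α] [LinearOrder α] [IsOrderedAddMonoid α]
    {x y z x' y' z' : α} (hx : x' - z' = x - z) (hy : y' - z' = y - z) :
    min (min x' y') z' - z' = min (min x y) z - z := by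
  rw [← min_sub_sub_right, ← min_sub_sub_right, ← min_sub_sub_right, ← min_sub_sub_right,
    hx, hy, sub_self, sub_self]

theorem DTWTable.sub_diag_eq_of_diffs_eq {a b b' : ℕ → ℝ} {m n n' : ℕ} {D D' : ℕ → ℕ → ℝ}
    (hD : DTWTable a b m n D) (hD' : DTWTable a b' m n' D') {i j : ℕ}
    (hi : 2 ≤ i) (him : i ≤ m) (hj : 2 ≤ j) (hjn : j ≤ n) (hjn' : j ≤ n') (hb : b j = b' j)
    (hleft : D' i (j - 1) - D' (i - 1) (j - 1) = D i (j - 1) - D (i - 1) (j - 1))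
    (hup : D' (i - 1) j - D' (i - 1) (j - 1) = D (i - 1) j - D (i - 1) (j - 1)) :
    D' i j - D' (i - 1) (j - 1) = D i j - D (i - 1) (j - 1) := by
  have hmin := min_min_sub_eq_of_sub_eq hleft hup
  rw [hD.2.2.2 i j (by omega) him (by omega) hjn, hD'.2.2.2 i j (by omega) him (by omega) hjn', hb]
  linarith

theorem stmt_2_general (a b b' : ℕ → ℝ) (m n n' : ℕ)
    (D D' : ℕ → ℕ → ℝ) (hD : DTWTable a b m n D) (hD' : DTWTable a b' m n' D')
    (U L U' L' : ℕ → ℕ → ℝ)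
    (hU : ∀ i j, 2 ≤ i → i ≤ m → 1 ≤ j → j ≤ n → U i j = D i j - D (i - 1) j)
    (hL : ∀ i j, 1 ≤ i → i ≤ m → 2 ≤ j → j ≤ n → L i j = D i j - D i (j - 1))
    (hU' : ∀ i j, 2 ≤ i → i ≤ m → 1 ≤ j → j ≤ n' → U' i j = D' i j - D' (i - 1) j)
    (hL' : ∀ i j, 1 ≤ i → i ≤ m → 2 ≤ j → j ≤ n' → L' i j = D' i j - D' i (j - 1)) :
    ∀ i j, 2 ≤ i → i ≤ m → 2 ≤ j → j ≤ n → j ≤ n' → b j = b' j →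
      (U i j ≠ U' i j ∨ L i j ≠ L' i j) →
      (U i (j - 1) ≠ U' i (j - 1) ∨ L (i - 1) j ≠ L' (i - 1) j) := by
  intro i j hi him hj hjn hjn' hb
  contrapose!
  rintro ⟨hleft, hup⟩
  rw [hU i (j - 1) hi him (by omega) (by omega), hU' i (j - 1) hi him (by omega) (by omega)]
    at hleft
  rw [hL (i - 1) j (by omega) (by omega) hj hjn, hL' (i - 1) j (by omega) (by omega) hj hjn'] at hup
  have hdiag := hD.sub_diag_eq_of_diffs_eq hD' hi him hj hjn hjn' hb hleft.symm hup.symm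
  rw [hU i j hi him (by omega) hjn, hU' i j hi him (by omega) hjn',
    hL i j (by omega) him hj hjn, hL' i j (by omega) him hj hjn']
  constructor <;> linarith

theorem stmt_2 (a b b' : ℕ → ℝ) (m n n' : ℕ) (hm : 1 ≤ m) (hn : 1 ≤ n) (hn' : 1 ≤ n')
    (D D' : ℕ → ℕ → ℝ) (hD : DTWTable a b m n D) (hD' : DTWTable a b' m n' D')
    (U L U' L' : ℕ → ℕ → ℝ)
    (hU : ∀ i j, 2 ≤ i → i ≤ m → 1 ≤ j → j ≤ n → U i j = D i j - D (i - 1) j)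
    (hU1 : ∀ j, 1 ≤ j → j ≤ n → U 1 j = 0)
    (hL : ∀ i j, 1 ≤ i → i ≤ m → 2 ≤ j → j ≤ n → L i j = D i j - D i (j - 1))
    (hL1 : ∀ i, 1 ≤ i → i ≤ m → L i 1 = 0)
    (hU' : ∀ i j, 2 ≤ i → i ≤ m → 1 ≤ j → j ≤ n' → U' i j = D' i j - D' (i - 1) j)
    (hU1' : ∀ j, 1 ≤ j → j ≤ n' → U' 1 j = 0)
    (hL' : ∀ i j, 1 ≤ i → i ≤ m → 2 ≤ j → j ≤ n' → L' i j = D' i j - D' i (j - 1))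
    (hL1' : ∀ i, 1 ≤ i → i ≤ m → L' i 1 = 0) :
    ∀ i j, 2 ≤ i → i ≤ m → 2 ≤ j → j ≤ n → j ≤ n' → b j = b' j →
      (U i j ≠ U' i j ∨ L i j ≠ L' i j) →
      (U i (j - 1) ≠ U' i (j - 1) ∨ L (i - 1) j ≠ L' (i - 1) j) :=
  stmt_2_general a b b' m n n' D D' hD hD' U L U' L' hU hL hU' hL'
end

section
/- If 2 ≤ j ≤ n and b_{j−1} = b_j, then D[i,j] ≥ D[i,j−1] for every 1 ≤ i ≤ m. Symmetrically, if 2 ≤ i ≤ m and a_{i−1} = a_i, then D[i,j] ≥ D[i−1,j] for every 1 ≤ j ≤ n. -/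
namespace DTWTable

variable {a b : ℕ → ℝ} {m n : ℕ} {D : ℕ → ℕ → ℝ}

theorem transpose (h : DTWTable a b m n D) : DTWTable b a n m (fun j i => D i j) := by
  obtain ⟨h11, hcol, hrow, hrec⟩ := h
  refine ⟨?_, fun j hj hjn => ?_, fun i hi him => ?_, fun j i hj hjn hi him => ?_⟩ <;> dsimp only
  · rw [h11, sub_sq_comm]
  · rw [hrow j hj hjn, sub_sq_comm]
  · rw [hcol i hi him, sub_sq_comm]
  · rw [hrec i j hi him hj hjn, min_comm (D i (j - 1)), sub_sq_comm]

theorem le_up_add_cost (h : DTWTable a b m n D) {i j : ℕ} (hi : 2 ≤ i) (him : i ≤ m)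
    (hj : 1 ≤ j) (hjn : j ≤ n) : D i j ≤ D (i - 1) j + (a i - b j) ^ 2 := by
  obtain ⟨-, hcol, -, hrec⟩ := h
  rcases hj.eq_or_lt with rfl | hj
  · exact (hcol i hi him).le
  · rw [hrec i j hi him hj hjn]
    gcongr
    exact (min_le_left _ _).trans (min_le_right _ _)

theorem left_le_of_b_eq (h : DTWTable a b m n D) {j : ℕ} (hj : 2 ≤ j) (hjn : j ≤ n)
    (hb : b (j - 1) = b j) {i : ℕ} (hi : 1 ≤ i) (him : i ≤ m) : D i (j - 1) ≤ D i j := by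
  induction i, hi using Nat.le_induction with
  | base =>
    rw [h.2.2.1 j hj hjn]
    exact le_add_of_nonneg_right (sq_nonneg _)
  | succ i hi ih =>
    have ih : D i (j - 1) ≤ D i j := ih (by omega)
    have hup : D (i + 1) (j - 1) ≤ D i (j - 1) + (a (i + 1) - b j) ^ 2 := by
      simpa only [Nat.add_sub_cancel, hb] using h.le_up_add_cost (i := i + 1) (j := j - 1) (by omega) him (by omega)
        (by omega)
    rw [h.2.2.2 (i + 1) j (by omega) him (by omega) hjn, Nat.add_sub_cancel]
    have hc := sq_nonneg (a (i + 1) - b j)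
    have : D (i + 1) (j - 1) - (a (i + 1) - b j) ^ 2 ≤
        min (min (D (i + 1) (j - 1)) (D i j)) (D i (j - 1)) :=
      le_min (le_min (by linarith) (by linarith)) (by linarith)
    linarith

end DTWTable

theorem stmt_3_general (a b : ℕ → ℝ) (m n : ℕ)
    (D : ℕ → ℕ → ℝ) (hD : DTWTable a b m n D) :
    (∀ j, 2 ≤ j → j ≤ n → b (j - 1) = b j →
      ∀ i, 1 ≤ i → i ≤ m → D i (j - 1) ≤ D i j) ∧
    (∀ i, 2 ≤ i → i ≤ m → a (i - 1) = a i →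
      ∀ j, 1 ≤ j → j ≤ n → D (i - 1) j ≤ D i j) :=
  ⟨fun _ hj hjn hb _ hi him => hD.left_le_of_b_eq hj hjn hb hi him,
    fun _ hi him ha _ hj hjn => hD.transpose.left_le_of_b_eq hi him ha hj hjn⟩

theorem stmt_3 (a b : ℕ → ℝ) (m n : ℕ) (hm : 1 ≤ m) (hn : 1 ≤ n)
    (D : ℕ → ℕ → ℝ) (hD : DTWTable a b m n D) :
    (∀ j, 2 ≤ j → j ≤ n → b (j - 1) = b j →
      ∀ i, 1 ≤ i → i ≤ m → D i (j - 1) ≤ D i j) ∧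
    (∀ i, 2 ≤ i → i ≤ m → a (i - 1) = a i →
      ∀ j, 1 ≤ j → j ≤ n → D (i - 1) j ≤ D i j) :=
  stmt_3_general a b m n D hD
end

section
/- If 2 ≤ i ≤ m, 2 ≤ j ≤ n, a_{i−1} = a_i and b_{j−1} = b_j, then D[i,j] = D[i−1,j−1] + (a_i − b_j)^2. -/
namespace DTWTable

variable {a b : ℕ → ℝ} {m n : ℕ} {D : ℕ → ℕ → ℝ}

theorem transpose_s4 (hD : DTWTable a b m n D) : DTWTable b a n m (Function.swap D) := by
  obtain ⟨h11, hcol, hrow, hrec⟩ := hD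
  refine ⟨?_, ?_, ?_, ?_⟩
  · rw [sub_sq_comm]
    exact h11
  · intro j hj hjn
    rw [sub_sq_comm]
    exact hrow j hj hjn
  · intro i hi him
    rw [sub_sq_comm]
    exact hcol i hi him
  · intro j i hj hjn hi him
    rw [sub_sq_comm, min_comm (D (i - 1) j)]
    exact hrec i j hi him hj hjn

theorem succ_succ (hD : DTWTable a b m n D) {i j : ℕ} (hi : 1 ≤ i) (him : i + 1 ≤ m)
    (hj : 1 ≤ j) (hjn : j + 1 ≤ n) :
    D (i + 1) (j + 1) =
      min (min (D (i + 1) j) (D i (j + 1))) (D i j) + (a (i + 1) - b (j + 1)) ^ 2 :=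
  hD.2.2.2 (i + 1) (j + 1) (by omega) him (by omega) hjn

theorem succ_col_le (hD : DTWTable a b m n D) {i j : ℕ} (hi : 1 ≤ i) (him : i ≤ m)
    (hj : 1 ≤ j) (hjn : j + 1 ≤ n) :
    D i (j + 1) ≤ D i j + (a i - b (j + 1)) ^ 2 := by
  obtain ⟨k, rfl⟩ : ∃ k, i = k + 1 := ⟨i - 1, by omega⟩
  rcases Nat.eq_zero_or_pos k with rfl | hk
  · exact (hD.2.2.1 (j + 1) (by omega) hjn).le
  · rw [hD.succ_succ hk him hj hjn]
    gcongr
    exact min_le_of_left_le (min_le_left _ _)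

theorem le_succ_row (hD : DTWTable a b m n D) {i : ℕ} (hi : 1 ≤ i) (him : i + 1 ≤ m)
    (ha : a i = a (i + 1)) {j : ℕ} (hj : 1 ≤ j) (hjn : j ≤ n) : D i j ≤ D (i + 1) j := by
  induction j, hj using Nat.le_induction with
  | base =>
    rw [hD.2.1 (i + 1) (by omega) him, Nat.add_sub_cancel]
    exact le_add_of_nonneg_right (sq_nonneg _)
  | succ j hj ih =>
    have hstep : D i (j + 1) ≤ D i j + (a (i + 1) - b (j + 1)) ^ 2 :=
      ha ▸ hD.succ_col_le hi (by omega) hj hjn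
    rw [hD.succ_succ hi him hj hjn, ← sub_le_iff_le_add]
    refine le_min (le_min ?_ ?_) ?_ <;> linarith [ih (by omega), sq_nonneg (a (i + 1) - b (j + 1))]

end DTWTable

theorem stmt_4_general (a b : ℕ → ℝ) (m n : ℕ)
    (D : ℕ → ℕ → ℝ) (hD : DTWTable a b m n D) :
    ∀ i j, 2 ≤ i → i ≤ m → 2 ≤ j → j ≤ n → a (i - 1) = a i → b (j - 1) = b j →
      D i j = D (i - 1) (j - 1) + (a i - b j) ^ 2 := by
  intro i j hi him hj hjn ha hb
  obtain ⟨i, rfl⟩ : ∃ k, i = k + 1 := ⟨i - 1, by omega⟩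
  obtain ⟨j, rfl⟩ : ∃ k, j = k + 1 := ⟨j - 1, by omega⟩
  simp only [Nat.add_sub_cancel] at ha hb ⊢
  have hrow : D i j ≤ D (i + 1) j :=
    hD.le_succ_row (by omega) him ha (by omega) (by omega)
  have hcol : D i j ≤ D i (j + 1) :=
    hD.transpose_s4.le_succ_row (by omega) hjn hb (by omega) (by omega)
  rw [hD.succ_succ (by omega) him (by omega) hjn, min_eq_right (le_min hrow hcol)]

theorem stmt_4 (a b : ℕ → ℝ) (m n : ℕ) (hm : 1 ≤ m) (hn : 1 ≤ n)
    (D : ℕ → ℕ → ℝ) (hD : DTWTable a b m n D) :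
    ∀ i j, 2 ≤ i → i ≤ m → 2 ≤ j → j ≤ n → a (i - 1) = a i → b (j - 1) = b j →
      D i j = D (i - 1) (j - 1) + (a i - b j) ^ 2 :=
  stmt_4_general a b m n D hD
end

section
/- For every 2 ≤ i ≤ m and 2 ≤ j ≤ n: if i < j then D[i,j] = D[i,j−1] + (a_i − b_j)^2; if i > j then D[i,j] = D[i−1,j] + (a_i − b_j)^2; and if i = j then D[i,j] = D[i−1,j−1] + (a_i − b_j)^2. -/
open Finset

/-- The cost of the warping path that runs diagonally from `(1, 1)` to
`(min i j, min i j)` and then straight to `(i, j)`. -/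
noncomputable def diagPathCost (c : ℕ → ℕ → ℝ) (i j : ℕ) : ℝ :=
  ∑ t ∈ Icc 1 (min i j), c t t + ∑ s ∈ Ioc i j, c i s + ∑ r ∈ Ioc j i, c r j

namespace diagPathCost

variable (c : ℕ → ℕ → ℝ)

theorem swap (i j : ℕ) : diagPathCost (Function.swap c) j i = diagPathCost c i j := by
  simp only [diagPathCost, Function.swap, min_comm j i]
  ring

theorem one_one : diagPathCost c 1 1 = c 1 1 := by
  simp [diagPathCost]

theorem succ_succ (k : ℕ) :
    diagPathCost c (k + 1) (k + 1) = diagPathCost c k k + c (k + 1) (k + 1) := by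
  simp [diagPathCost, sum_Icc_succ_top]

theorem succ_right {i k : ℕ} (hik : i ≤ k) :
    diagPathCost c i (k + 1) = diagPathCost c i k + c i (k + 1) := by
  simp [diagPathCost, min_eq_left hik, min_eq_left (hik.trans k.le_succ),
    Ioc_eq_empty_of_le hik, Ioc_eq_empty_of_le (hik.trans k.le_succ), sum_Ioc_succ_top hik,
    add_assoc]

theorem succ_left {j k : ℕ} (hjk : j ≤ k) :
    diagPathCost c (k + 1) j = diagPathCost c k j + c (k + 1) j := by
  rw [← swap, ← swap c k, succ_right _ hjk]

theorem succ_left_le {j k : ℕ} (hkj : k + 1 ≤ j)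
    (hc : ∀ s ∈ Icc (k + 1) j, c (k + 1) s ≤ c k s) :
    diagPathCost c (k + 1) j ≤ diagPathCost c k j := by
  have hkj' : k ≤ j := k.le_succ.trans hkj
  have hsplit (f : ℕ → ℝ) : ∑ s ∈ Ioc k j, f s = f (k + 1) + ∑ s ∈ Ioc (k + 1) j, f s := by
    rw [← sum_Ioc_consecutive f k.le_succ hkj, Nat.Ioc_succ_singleton, sum_singleton]
  simp only [diagPathCost, min_eq_left hkj, min_eq_left hkj', Ioc_eq_empty_of_le hkj,
    Ioc_eq_empty_of_le hkj', sum_empty, add_zero, sum_Icc_succ_top (Nat.le_add_left 1 k),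
    hsplit, add_assoc]
  gcongr with s hs
  · exact hc _ (by simp [hkj])
  · exact hc s (Ioc_subset_Icc_self hs)

theorem succ_right_le {i k : ℕ} (hki : k + 1 ≤ i)
    (hc : ∀ r ∈ Icc (k + 1) i, c r (k + 1) ≤ c r k) :
    diagPathCost c i (k + 1) ≤ diagPathCost c i k := by
  rw [← swap, ← swap c i k]
  exact succ_left_le _ hki hc

theorem min_pred_add {p q : ℕ}
    (hrow : ∀ s ∈ Icc (p + 1) q, c (p + 1) s ≤ c p s)
    (hcol : ∀ r ∈ Icc (q + 1) p, c r (q + 1) ≤ c r q)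
    (hright : 0 ≤ c p (q + 1)) (hdown : 0 ≤ c (p + 1) q) :
    min (min (diagPathCost c (p + 1) q) (diagPathCost c p (q + 1))) (diagPathCost c p q) +
      c (p + 1) (q + 1) = diagPathCost c (p + 1) (q + 1) := by
  rcases lt_trichotomy p q with hpq | rfl | hqp
  · have hleft : diagPathCost c (p + 1) q ≤ diagPathCost c p q := succ_left_le c hpq hrow
    have hup : diagPathCost c p q ≤ diagPathCost c p (q + 1) := by
      rw [succ_right c hpq.le]
      linarith
    rw [min_eq_left (hleft.trans hup), min_eq_left hleft, succ_right c hpq]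
  · have hleft : diagPathCost c p p ≤ diagPathCost c (p + 1) p := by
      rw [succ_left c le_rfl]
      linarith
    have hup : diagPathCost c p p ≤ diagPathCost c p (p + 1) := by
      rw [succ_right c le_rfl]
      linarith
    rw [min_eq_right (le_min hleft hup), succ_succ]
  · have hup : diagPathCost c p (q + 1) ≤ diagPathCost c p q := succ_right_le c hqp hcol
    have hleft : diagPathCost c p q ≤ diagPathCost c (p + 1) q := by
      rw [succ_left c hqp.le]
      linarith
    rw [min_eq_right (hup.trans hleft), min_eq_left hup, succ_left c hqp]

end diagPathCost

def IsDTWTable (c : ℕ → ℕ → ℝ) (m n : ℕ) (D : ℕ → ℕ → ℝ) : Prop :=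
  D 1 1 = c 1 1 ∧
  (∀ i, 1 < i → i ≤ m → D i 1 = D (i - 1) 1 + c i 1) ∧
  (∀ j, 1 < j → j ≤ n → D 1 j = D 1 (j - 1) + c 1 j) ∧
  (∀ i j, 1 < i → i ≤ m → 1 < j → j ≤ n →
    D i j = min (min (D i (j - 1)) (D (i - 1) j)) (D (i - 1) (j - 1)) + c i j)

theorem DTWTable.isDTWTable {a b : ℕ → ℝ} {m n : ℕ} {D : ℕ → ℕ → ℝ}
    (hD : DTWTable a b m n D) : IsDTWTable (fun i j => (a i - b j) ^ 2) m n D :=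
  hD

theorem IsDTWTable.eq_diagPathCost {c : ℕ → ℕ → ℝ} {m n : ℕ} {D : ℕ → ℕ → ℝ}
    (hD : IsDTWTable c m n D)
    (hrow : ∀ i j, 1 ≤ i → i < m → 1 ≤ j → j ≤ n → c (i + 1) j ≤ c i j)
    (hcol : ∀ i j, 1 ≤ i → i ≤ m → 1 ≤ j → j < n → c i (j + 1) ≤ c i j)
    (hnonneg : ∀ i j, 1 ≤ i → i ≤ m → 1 ≤ j → j ≤ n → 0 ≤ c i j)
    ⦃i j : ℕ⦄ (hi : 1 ≤ i) (him : i ≤ m) (hj : 1 ≤ j) (hjn : j ≤ n) :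
    D i j = diagPathCost c i j := by
  obtain ⟨h11, hfirstCol, hfirstRow, hstep⟩ := hD
  induction i, hi using Nat.le_induction generalizing j with
  | base =>
    induction j, hj using Nat.le_induction with
    | base => rw [h11, diagPathCost.one_one]
    | succ q hq ih =>
      rw [hfirstRow (q + 1) (by omega) hjn, Nat.add_sub_cancel, ih (by omega),
        diagPathCost.succ_right c hq]
  | succ p hp ihp =>
    induction j, hj using Nat.le_induction with
    | base =>
      rw [hfirstCol (p + 1) (by omega) him, Nat.add_sub_cancel, ihp (by omega) le_rfl hjn,
        diagPathCost.succ_left c hp]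
    | succ q hq ihq =>
      rw [hstep (p + 1) (q + 1) (by omega) him (by omega) hjn, Nat.add_sub_cancel,
        Nat.add_sub_cancel, ihq (by omega), ihp (by omega) (by omega) hjn,
        ihp (by omega) (by omega) (by omega)]
      refine diagPathCost.min_pred_add c (fun s hs => ?_) (fun r hr => ?_)
        (hnonneg _ _ hp (by omega) (by omega) hjn) (hnonneg _ _ (by omega) him hq (by omega))
      · rw [mem_Icc] at hs
        exact hrow p s hp (by omega) (by omega) (by omega)
      · rw [mem_Icc] at hr
        exact hcol r q (by omega) (by omega) hq (by omega)

theorem le_of_succ_antitone_of_succ_monotone {a b : ℕ → ℝ} {m n : ℕ}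
    (hA : ∀ i, 1 ≤ i → i < m → a (i + 1) ≤ a i)
    (hB : ∀ j, 1 ≤ j → j < n → b j ≤ b (j + 1)) (hAB : b n < a m)
    ⦃i j : ℕ⦄ (hi : 1 ≤ i) (him : i ≤ m) (hj : 1 ≤ j) (hjn : j ≤ n) : b j ≤ a i := by
  have ha : AntitoneOn a (Set.Icc 1 m) := antitoneOn_of_succ_le Set.ordConnected_Icc
    fun k _ hk hk' => hA k hk.1 (Order.succ_le_iff.1 hk'.2)
  have hb : MonotoneOn b (Set.Icc 1 n) := monotoneOn_of_le_succ Set.ordConnected_Icc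
    fun k _ hk hk' => hB k hk.1 (Order.succ_le_iff.1 hk'.2)
  calc b j ≤ b n := hb ⟨hj, hjn⟩ ⟨hj.trans hjn, le_rfl⟩ hjn
    _ ≤ a m := hAB.le
    _ ≤ a i := ha ⟨hi, him⟩ ⟨hi.trans him, le_rfl⟩ him

theorem stmt_8_general (a b : ℕ → ℝ) (m n : ℕ)
    (D : ℕ → ℕ → ℝ) (hD : DTWTable a b m n D)
    (hA : ∀ i, 1 ≤ i → i < m → a (i + 1) ≤ a i)
    (hB : ∀ j, 1 ≤ j → j < n → b j ≤ b (j + 1))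
    (hAB : b n < a m) :
    ∀ i j, 2 ≤ i → i ≤ m → 2 ≤ j → j ≤ n →
      (i < j → D i j = D i (j - 1) + (a i - b j) ^ 2) ∧
      (j < i → D i j = D (i - 1) j + (a i - b j) ^ 2) ∧
      (i = j → D i j = D (i - 1) (j - 1) + (a i - b j) ^ 2) := by
  have hba := le_of_succ_antitone_of_succ_monotone hA hB hAB
  have hG := hD.isDTWTable.eq_diagPathCost
    (fun i j hi him hj hjn => pow_le_pow_left₀ (sub_nonneg.2 (hba (by omega) him hj hjn))
      (sub_le_sub_right (hA i hi him) _) 2)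
    (fun i j hi him hj hjn => pow_le_pow_left₀ (sub_nonneg.2 (hba hi him (by omega) hjn))
      (sub_le_sub_left (hB j hj hjn) _) 2)
    (fun _ _ _ _ _ _ => sq_nonneg _)
  intro i j hi him hj hjn
  obtain ⟨p, rfl⟩ : ∃ p, i = p + 1 := ⟨i - 1, by omega⟩
  obtain ⟨q, rfl⟩ : ∃ q, j = q + 1 := ⟨j - 1, by omega⟩
  simp only [Nat.add_sub_cancel]
  rw [hG (by omega) him (by omega) hjn]
  refine ⟨fun hpq => ?_, fun hqp => ?_, fun hpq => ?_⟩
  · rw [hG (by omega) him (by omega) (by omega), diagPathCost.succ_right _ (by omega)]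
  · rw [hG (by omega) (by omega) (by omega) hjn, diagPathCost.succ_left _ (by omega)]
  · obtain rfl : p = q := by omega
    rw [hG (by omega) (by omega) (by omega) (by omega), diagPathCost.succ_succ]

theorem stmt_8 (a b : ℕ → ℝ) (m n : ℕ) (hm : 1 ≤ m) (hn : 1 ≤ n)
    (D : ℕ → ℕ → ℝ) (hD : DTWTable a b m n D)
    (hA : ∀ i, 1 ≤ i → i < m → a (i + 1) ≤ a i)
    (hB : ∀ j, 1 ≤ j → j < n → b j ≤ b (j + 1))
    (hAB : b n < a m) :
    ∀ i j, 2 ≤ i → i ≤ m → 2 ≤ j → j ≤ n →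
      (i < j → D i j = D i (j - 1) + (a i - b j) ^ 2) ∧
      (j < i → D i j = D (i - 1) j + (a i - b j) ^ 2) ∧
      (i = j → D i j = D (i - 1) (j - 1) + (a i - b j) ^ 2) :=
  stmt_8_general a b m n D hD hA hB hAB
end

section
/- For all 1 ≤ i ≤ m and 1 ≤ j ≤ n with i ≤ j, one has D[i,j] = Σ_{i′=1}^{i} (a_{i′} − b_{i′})^2 + Σ_{j′=i+1}^{j} (a_i − b_{j′})^2. -/
open Finset

-- The cost of the path from `(1, 1)` along the diagonal to `(min i j, min i j)` and then straight
-- to `(i, j)`: at most one of the last two sums is nonempty.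
def dtwClosedForm (c : ℕ → ℕ → ℝ) (i j : ℕ) : ℝ :=
  (∑ k ∈ Icc 1 (min i j), c k k) + (∑ x ∈ Icc (i + 1) j, c i x) + ∑ x ∈ Icc (j + 1) i, c x j

section ClosedForm

variable {c : ℕ → ℕ → ℝ} {i j p q : ℕ}

theorem dtwClosedForm_swap (c : ℕ → ℕ → ℝ) (i j : ℕ) :
    dtwClosedForm (Function.swap c) j i = dtwClosedForm c i j := by
  simp only [dtwClosedForm, Function.swap, min_comm j i]
  ring

theorem dtwClosedForm_of_le (h : i ≤ j) :
    dtwClosedForm c i j = (∑ k ∈ Icc 1 i, c k k) + ∑ x ∈ Icc (i + 1) j, c i x := by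
  rw [dtwClosedForm, min_eq_left h, Icc_eq_empty_of_lt (Nat.lt_succ_of_le h), sum_empty,
    add_zero]

theorem dtwClosedForm_succ_right (h : i ≤ j) :
    dtwClosedForm c i (j + 1) = dtwClosedForm c i j + c i (j + 1) := by
  rw [dtwClosedForm_of_le (by omega), dtwClosedForm_of_le h, sum_Icc_succ_top (by omega),
    add_assoc]

theorem dtwClosedForm_succ_left (h : j ≤ i) :
    dtwClosedForm c (i + 1) j = dtwClosedForm c i j + c (i + 1) j := by
  simpa only [dtwClosedForm_swap] using dtwClosedForm_succ_right (c := Function.swap c) h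

theorem dtwClosedForm_succ_succ_self (k : ℕ) :
    dtwClosedForm c (k + 1) (k + 1) = dtwClosedForm c k k + c (k + 1) (k + 1) := by
  simp only [dtwClosedForm_of_le le_rfl, Icc_eq_empty_of_lt (Nat.lt_succ_self _), sum_empty,
    add_zero, sum_Icc_succ_top (Nat.le_add_left 1 k)]

theorem dtwClosedForm_succ_left_le (hpq : p < q) (hc : ∀ x ∈ Icc (p + 1) q, c (p + 1) x ≤ c p x) :
    dtwClosedForm c (p + 1) q ≤ dtwClosedForm c p q := by
  rw [dtwClosedForm_of_le hpq, dtwClosedForm_of_le hpq.le, sum_Icc_succ_top (by omega),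
    add_assoc, ← add_sum_Ioc_eq_sum_Icc (a := p + 1) (by omega), ← Icc_add_one_left_eq_Ioc]
  gcongr with x hx
  · exact hc _ (mem_Icc.2 ⟨le_rfl, hpq⟩)
  · obtain ⟨hpx, hxq⟩ := mem_Icc.1 hx
    exact hc x (mem_Icc.2 ⟨by omega, hxq⟩)

theorem dtwClosedForm_min_add_of_le (hc0 : ∀ i j, 0 ≤ c i j) (hpq : p ≤ q)
    (hc : ∀ x ∈ Icc (p + 1) q, c (p + 1) x ≤ c p x) :
    min (min (dtwClosedForm c (p + 1) q) (dtwClosedForm c p (q + 1))) (dtwClosedForm c p q)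
      + c (p + 1) (q + 1) = dtwClosedForm c (p + 1) (q + 1) := by
  rcases hpq.lt_or_eq with hpq | rfl
  · have hleft := dtwClosedForm_succ_left_le hpq hc
    have hup : dtwClosedForm c p q ≤ dtwClosedForm c p (q + 1) := by
      rw [dtwClosedForm_succ_right hpq.le]
      linarith [hc0 p (q + 1)]
    rw [min_eq_left (hleft.trans hup), min_eq_left hleft, dtwClosedForm_succ_right hpq]
  · have hleft : dtwClosedForm c p p ≤ dtwClosedForm c (p + 1) p := by
      rw [dtwClosedForm_succ_left le_rfl]
      linarith [hc0 (p + 1) p]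
    have hup : dtwClosedForm c p p ≤ dtwClosedForm c p (p + 1) := by
      rw [dtwClosedForm_succ_right le_rfl]
      linarith [hc0 p (p + 1)]
    rw [min_eq_right (le_min hleft hup), dtwClosedForm_succ_succ_self]

theorem dtwClosedForm_min_add (hc0 : ∀ i j, 0 ≤ c i j)
    (hrow : ∀ x ∈ Icc (p + 1) q, c (p + 1) x ≤ c p x)
    (hcol : ∀ x ∈ Icc (q + 1) p, c x (q + 1) ≤ c x q) :
    min (min (dtwClosedForm c (p + 1) q) (dtwClosedForm c p (q + 1))) (dtwClosedForm c p q)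
      + c (p + 1) (q + 1) = dtwClosedForm c (p + 1) (q + 1) := by
  rcases le_total p q with hpq | hqp
  · exact dtwClosedForm_min_add_of_le hc0 hpq hrow
  · have := dtwClosedForm_min_add_of_le (c := Function.swap c) (fun i j => hc0 j i) hqp hcol
    simpa only [dtwClosedForm_swap, Function.swap, min_comm (dtwClosedForm c p (q + 1))]
      using this

end ClosedForm

theorem IsDTWTable.eq_dtwClosedForm {c : ℕ → ℕ → ℝ} {m n : ℕ} {D : ℕ → ℕ → ℝ}
    (hD : IsDTWTable c m n D) (hc0 : ∀ i j, 0 ≤ c i j)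
    (hrow : ∀ j ∈ Set.Icc 1 n, AntitoneOn (c · j) (Set.Icc 1 m))
    (hcol : ∀ i ∈ Set.Icc 1 m, AntitoneOn (c i) (Set.Icc 1 n)) :
    ∀ i, 1 ≤ i → i ≤ m → ∀ j, 1 ≤ j → j ≤ n → D i j = dtwClosedForm c i j := by
  obtain ⟨h11, hfirstCol, hfirstRow, hrec⟩ := hD
  intro i hi him
  induction i, hi using Nat.le_induction with
  | base =>
    intro j hj hjn
    induction j, hj using Nat.le_induction with
    | base => simp [h11, dtwClosedForm]
    | succ j hj ih =>
      rw [hfirstRow (j + 1) (by omega) hjn, Nat.add_sub_cancel, ih (by omega),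
        dtwClosedForm_succ_right hj]
  | succ i hi ih =>
    intro j hj hjn
    induction j, hj using Nat.le_induction with
    | base =>
      rw [hfirstCol (i + 1) (by omega) him, Nat.add_sub_cancel, ih (by omega) 1 le_rfl hjn,
        dtwClosedForm_succ_left hi]
    | succ j hj ihj =>
      rw [hrec (i + 1) (j + 1) (by omega) him (by omega) hjn, Nat.add_sub_cancel,
        Nat.add_sub_cancel, ihj (by omega), ih (by omega) (j + 1) (by omega) hjn,
        ih (by omega) j hj (by omega)]
      refine dtwClosedForm_min_add hc0 (fun x hx => ?_) (fun x hx => ?_)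
      · obtain ⟨hx1, hx2⟩ := mem_Icc.1 hx
        exact hrow x ⟨by omega, by omega⟩ ⟨by omega, by omega⟩ ⟨by omega, by omega⟩ (by omega)
      · obtain ⟨hx1, hx2⟩ := mem_Icc.1 hx
        exact hcol x ⟨by omega, by omega⟩ ⟨by omega, by omega⟩ ⟨by omega, by omega⟩ (by omega)

theorem stmt_9_general (a b : ℕ → ℝ) (m n : ℕ)
    (D : ℕ → ℕ → ℝ) (hD : DTWTable a b m n D)
    (hA : ∀ i, 1 ≤ i → i < m → a (i + 1) ≤ a i)
    (hB : ∀ j, 1 ≤ j → j < n → b j ≤ b (j + 1))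
    (hAB : b n < a m) :
    ∀ i j, 1 ≤ i → i ≤ m → 1 ≤ j → j ≤ n → i ≤ j →
      D i j = (∑ i' ∈ Finset.Icc 1 i, (a i' - b i') ^ 2) +
        ∑ j' ∈ Finset.Icc (i + 1) j, (a i - b j') ^ 2 := by
  have ha : AntitoneOn a (Set.Icc 1 m) := antitoneOn_of_succ_le Set.ordConnected_Icc
    fun i _ hi hi' => by rw [Order.succ_eq_add_one] at hi' ⊢; exact hA i hi.1 hi'.2
  have hb : MonotoneOn b (Set.Icc 1 n) := monotoneOn_of_le_succ Set.ordConnected_Icc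
    fun j _ hj hj' => by rw [Order.succ_eq_add_one] at hj' ⊢; exact hB j hj.1 hj'.2
  have hba : ∀ i ∈ Set.Icc 1 m, ∀ j ∈ Set.Icc 1 n, b j ≤ a i := fun i hi j hj =>
    calc b j ≤ b n := hb hj ⟨hj.1.trans hj.2, le_rfl⟩ hj.2
      _ ≤ a m := hAB.le
      _ ≤ a i := ha hi ⟨hi.1.trans hi.2, le_rfl⟩ hi.2
  have hrow : ∀ j ∈ Set.Icc 1 n, AntitoneOn (fun i => (a i - b j) ^ 2) (Set.Icc 1 m) :=
    fun j hj i hi i' hi' hii' =>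
      pow_le_pow_left₀ (sub_nonneg.2 (hba i' hi' j hj)) (sub_le_sub_right (ha hi hi' hii') _) 2
  have hcol : ∀ i ∈ Set.Icc 1 m, AntitoneOn (fun j => (a i - b j) ^ 2) (Set.Icc 1 n) :=
    fun i hi j hj j' hj' hjj' =>
      pow_le_pow_left₀ (sub_nonneg.2 (hba i hi j' hj')) (sub_le_sub_left (hb hj hj' hjj') _) 2
  intro i j hi him hj hjn hij
  rw [IsDTWTable.eq_dtwClosedForm (c := fun i j => (a i - b j) ^ 2) hD (fun _ _ => sq_nonneg _)
    hrow hcol i hi him j hj hjn, dtwClosedForm_of_le hij]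

theorem stmt_9 (a b : ℕ → ℝ) (m n : ℕ) (hm : 1 ≤ m) (hn : 1 ≤ n)
    (D : ℕ → ℕ → ℝ) (hD : DTWTable a b m n D)
    (hA : ∀ i, 1 ≤ i → i < m → a (i + 1) ≤ a i)
    (hB : ∀ j, 1 ≤ j → j < n → b j ≤ b (j + 1))
    (hAB : b n < a m) :
    ∀ i j, 1 ≤ i → i ≤ m → 1 ≤ j → j ≤ n → i ≤ j →
      D i j = (∑ i' ∈ Finset.Icc 1 i, (a i' - b i') ^ 2) +
        ∑ j' ∈ Finset.Icc (i + 1) j, (a i - b j') ^ 2 :=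
  stmt_9_general a b m n D hD hA hB hAB
end

section
/- For every 2 ≤ i ≤ m and every j with i < j ≤ n−1, if a_{i−1} ≠ a_i, then D[i,j+1] − D[i−1,j+1] ≠ D′[i,j] − D′[i−1,j]. -/
open Finset

theorem sum_Ioc_succ_right_eq_add_sum_shift {M : Type*} [AddCommMonoid M] (f : ℕ → M)
    {i j : ℕ} (hij : i ≤ j) :
    ∑ l ∈ Ioc i (j + 1), f l = f (i + 1) + ∑ l ∈ Ioc i j, f (l + 1) := by
  rw [← sum_Ioc_consecutive f (Nat.le_succ i) (by omega), Nat.Ioc_succ_singleton, sum_singleton,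
    Nat.succ_eq_add_one, ← map_add_right_Ioc, sum_map]
  rfl

theorem lt_of_antitoneOn_of_monotoneOn {β : Type*} [Preorder β] {a b : ℕ → β} {m n : ℕ}
    (ha : AntitoneOn a (Set.Icc 1 m)) (hb : MonotoneOn b (Set.Icc 1 n)) (hab : b n < a m)
    {i j : ℕ} (hi : i ∈ Set.Icc 1 m) (hj : j ∈ Set.Icc 1 n) : b j < a i :=
  (hb hj ⟨hj.1.trans hj.2, le_rfl⟩ hj.2).trans_lt
    (hab.trans_le (ha hi ⟨hi.1.trans hi.2, le_rfl⟩ hi.2))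

theorem DTWTable.unique {a b : ℕ → ℝ} {m n : ℕ} {D E : ℕ → ℕ → ℝ}
    (hD : DTWTable a b m n D) (hE : DTWTable a b m n E)
    {i j : ℕ} (hi : 1 ≤ i) (him : i ≤ m) (hj : 1 ≤ j) (hjn : j ≤ n) : D i j = E i j := by
  obtain ⟨hD₁₁, hDcol, hDrow, hD⟩ := hD
  obtain ⟨hE₁₁, hEcol, hErow, hE⟩ := hE
  induction i, hi using Nat.le_induction generalizing j with
  | base =>
    induction j, hj using Nat.le_induction with
    | base => rw [hD₁₁, hE₁₁]
    | succ j hj ih =>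
      rw [hDrow (j + 1) (by omega) hjn, hErow (j + 1) (by omega) hjn, Nat.add_sub_cancel,
        ih (by omega)]
  | succ i hi ihi =>
    induction j, hj using Nat.le_induction with
    | base =>
      rw [hDcol (i + 1) (by omega) him, hEcol (i + 1) (by omega) him, Nat.add_sub_cancel,
        ihi (by omega) le_rfl (by omega)]
    | succ j hj ihj =>
      rw [hD (i + 1) (j + 1) (by omega) him (by omega) hjn,
        hE (i + 1) (j + 1) (by omega) him (by omega) hjn, Nat.add_sub_cancel, Nat.add_sub_cancel,
        ihj (by omega), ihi (by omega) (by omega) hjn, ihi (by omega) hj (by omega)]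

/-- The cost of the warping path from `(1, 1)` along the diagonal to `(min i j, min i j)` and then
straight to `(i, j)`; at most one of the last two sums is nonempty. -/
noncomputable def diagonalPathCost (a b : ℕ → ℝ) (i j : ℕ) : ℝ :=
  ∑ k ∈ Icc 1 (min i j), (a k - b k) ^ 2 + ∑ l ∈ Ioc i j, (a i - b l) ^ 2 +
    ∑ l ∈ Ioc j i, (a l - b j) ^ 2

namespace diagonalPathCost

variable {a b : ℕ → ℝ} {i j : ℕ}

theorem swap :
    diagonalPathCost (fun k => -b k) (fun k => -a k) j i = diagonalPathCost a b i j := by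
  simp only [diagonalPathCost, min_comm j i, neg_sub_neg]
  ring

theorem succ_succ_self : diagonalPathCost a b (i + 1) (i + 1) =
    diagonalPathCost a b i i + (a (i + 1) - b (i + 1)) ^ 2 := by
  simp [diagonalPathCost, sum_Icc_succ_top]

theorem succ_right (h : i ≤ j) :
    diagonalPathCost a b i (j + 1) = diagonalPathCost a b i j + (a i - b (j + 1)) ^ 2 := by
  simp only [diagonalPathCost, min_eq_left h, min_eq_left (h.trans j.le_succ), sum_Ioc_succ_top h,
    Ioc_eq_empty_of_le h, Ioc_eq_empty_of_le (h.trans j.le_succ)]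
  ring

theorem succ_left (h : j ≤ i) :
    diagonalPathCost a b (i + 1) j = diagonalPathCost a b i j + (a (i + 1) - b j) ^ 2 := by
  rw [← swap, succ_right h, swap, neg_sub_neg]

theorem succ_sub (hij : i < j) :
    diagonalPathCost a b (i + 1) j - diagonalPathCost a b i j =
      ∑ l ∈ Ioc i j, ((a (i + 1) - b l) ^ 2 - (a i - b l) ^ 2) := by
  induction j, hij using Nat.le_induction with
  | base =>
    rw [succ_succ_self, succ_right le_rfl, Nat.Ioc_succ_singleton, sum_singleton]
    ring
  | succ j hij ih =>
    rw [succ_right hij, succ_right (by omega), sum_Ioc_succ_top (by omega), ← ih]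
    ring

theorem succ_left_le (hij : i < j) (ha : a (i + 1) ≤ a i) (hab : ∀ l ∈ Ioc i j, b l ≤ a (i + 1)) :
    diagonalPathCost a b (i + 1) j ≤ diagonalPathCost a b i j := by
  rw [← sub_nonpos, succ_sub hij]
  exact sum_nonpos fun l hl =>
    sub_nonpos.2 (pow_le_pow_left₀ (sub_nonneg.2 (hab l hl)) (sub_le_sub_right ha _) 2)

theorem eq_min_add_of_lt (hij : i < j) (ha : a (i + 1) ≤ a i)
    (hab : ∀ l ∈ Ioc i j, b l ≤ a (i + 1)) :
    diagonalPathCost a b (i + 1) (j + 1) =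
      min (min (diagonalPathCost a b (i + 1) j) (diagonalPathCost a b i (j + 1)))
        (diagonalPathCost a b i j) + (a (i + 1) - b (j + 1)) ^ 2 := by
  have hleft := succ_left_le hij ha hab
  have hright : diagonalPathCost a b i j ≤ diagonalPathCost a b i (j + 1) := by
    rw [succ_right hij.le]
    exact le_add_of_nonneg_right (sq_nonneg _)
  rw [min_eq_left (hleft.trans hright), min_eq_left hleft, succ_right hij]

theorem eq_min_add_of_gt (hji : j < i) (hb : b j ≤ b (j + 1))
    (hab : ∀ l ∈ Ioc j i, b (j + 1) ≤ a l) :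
    diagonalPathCost a b (i + 1) (j + 1) =
      min (min (diagonalPathCost a b (i + 1) j) (diagonalPathCost a b i (j + 1)))
        (diagonalPathCost a b i j) + (a (i + 1) - b (j + 1)) ^ 2 := by
  have := eq_min_add_of_lt (a := fun k => -b k) (b := fun k => -a k) hji (neg_le_neg hb)
    fun l hl => neg_le_neg (hab l hl)
  rwa [swap, swap, swap, swap, min_comm (diagonalPathCost a b i (j + 1)), neg_sub_neg] at this

theorem eq_min_add_self :
    diagonalPathCost a b (i + 1) (i + 1) =
      min (min (diagonalPathCost a b (i + 1) i) (diagonalPathCost a b i (i + 1)))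
        (diagonalPathCost a b i i) + (a (i + 1) - b (i + 1)) ^ 2 := by
  rw [succ_left (i := i) le_rfl, succ_right (i := i) le_rfl,
    min_eq_right (le_min (le_add_of_nonneg_right (sq_nonneg _))
      (le_add_of_nonneg_right (sq_nonneg _))), succ_succ_self]

end diagonalPathCost

theorem dtwTable_diagonalPathCost {a b : ℕ → ℝ} {m n : ℕ}
    (ha : ∀ i, 1 ≤ i → i < m → a (i + 1) ≤ a i) (hb : ∀ j, 1 ≤ j → j < n → b j ≤ b (j + 1))
    (hab : ∀ i j, 1 ≤ i → i ≤ m → 1 ≤ j → j ≤ n → b j ≤ a i) :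
    DTWTable a b m n (diagonalPathCost a b) := by
  refine ⟨?_, ?_, ?_, ?_⟩
  · simp [diagonalPathCost]
  · intro i hi _
    obtain ⟨i, rfl⟩ : ∃ k, i = k + 1 := ⟨i - 1, by omega⟩
    exact diagonalPathCost.succ_left (by omega)
  · intro j hj _
    obtain ⟨j, rfl⟩ : ∃ k, j = k + 1 := ⟨j - 1, by omega⟩
    exact diagonalPathCost.succ_right (by omega)
  · intro i j hi him hj hjn
    obtain ⟨i, rfl⟩ : ∃ k, i = k + 1 := ⟨i - 1, by omega⟩
    obtain ⟨j, rfl⟩ : ∃ k, j = k + 1 := ⟨j - 1, by omega⟩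
    rw [Nat.add_sub_cancel, Nat.add_sub_cancel]
    rcases lt_trichotomy i j with hij | rfl | hji
    · exact diagonalPathCost.eq_min_add_of_lt hij (ha i (by omega) (by omega))
        fun l hl => hab (i + 1) l (by omega) him (by grind) (by grind)
    · exact diagonalPathCost.eq_min_add_self
    · exact diagonalPathCost.eq_min_add_of_gt hji (hb j (by omega) (by omega))
        fun l hl => hab l (j + 1) (by grind) (by grind) (by omega) hjn

theorem stmt_13_general (a b : ℕ → ℝ) (m n : ℕ)
    (D D' : ℕ → ℕ → ℝ) (hD : DTWTable a b m n D)
    (hD' : DTWTable a (fun j => b (j + 1)) m (n - 1) D')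
    (hA : ∀ i, 1 ≤ i → i < m → a (i + 1) ≤ a i)
    (hB : ∀ j, 1 ≤ j → j < n → b j ≤ b (j + 1))
    (hAB : b n < a m) :
    ∀ i j, 2 ≤ i → i ≤ m → i < j → j ≤ n - 1 → a (i - 1) ≠ a i →
      D i (j + 1) - D (i - 1) (j + 1) ≠ D' i j - D' (i - 1) j := by
  have hba : ∀ i j, 1 ≤ i → i ≤ m → 1 ≤ j → j ≤ n → b j < a i := fun i j hi him hj hjn =>
    lt_of_antitoneOn_of_monotoneOn
      (antitoneOn_of_add_one_le Set.ordConnected_Icc fun i _ hi hi' => hA i hi.1 hi'.2)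
      (monotoneOn_of_le_add_one Set.ordConnected_Icc fun j _ hj hj' => hB j hj.1 hj'.2)
      hAB ⟨hi, him⟩ ⟨hj, hjn⟩
  have hP := dtwTable_diagonalPathCost hA hB fun i j hi him hj hjn => (hba i j hi him hj hjn).le
  have hP' := dtwTable_diagonalPathCost (b := fun j => b (j + 1)) (n := n - 1) hA
    (fun j hj hjn => hB (j + 1) (by omega) (by omega))
    fun i j hi him hj hjn => (hba i (j + 1) hi him (by omega) (by omega)).le
  intro i j hi him hij hjn hne
  obtain ⟨i, rfl⟩ : ∃ k, i = k + 1 := ⟨i - 1, by omega⟩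
  rw [Nat.add_sub_cancel] at hne ⊢
  rw [hD.unique hP (by omega) him (by omega) (by omega), hD.unique hP (by omega) (by omega)
      (by omega) (by omega), hD'.unique hP' (by omega) him (by omega) hjn,
    hD'.unique hP' (by omega) (by omega) (by omega) hjn, diagonalPathCost.succ_sub (by omega),
    diagonalPathCost.succ_sub (by omega), sum_Ioc_succ_right_eq_add_sum_shift _ (by omega),
    Ne, add_eq_right]
  have hbi := hba (i + 1) (i + 1) (by omega) him (by omega) (by omega)
  have hai : a (i + 1) < a i := (hA i (by omega) (by omega)).lt_of_ne (Ne.symm hne)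
  exact sub_ne_zero.2 (pow_lt_pow_left₀ (by linarith) (by linarith) two_ne_zero).ne

theorem stmt_13 (a b : ℕ → ℝ) (m n : ℕ) (hm : 2 ≤ m) (hn : 3 ≤ n)
    (D D' : ℕ → ℕ → ℝ) (hD : DTWTable a b m n D)
    (hD' : DTWTable a (fun j => b (j + 1)) m (n - 1) D')
    (hA : ∀ i, 1 ≤ i → i < m → a (i + 1) ≤ a i)
    (hB : ∀ j, 1 ≤ j → j < n → b j ≤ b (j + 1))
    (hAB : b n < a m) :
    ∀ i j, 2 ≤ i → i ≤ m → i < j → j ≤ n - 1 → a (i - 1) ≠ a i →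
      D i (j + 1) - D (i - 1) (j + 1) ≠ D' i j - D' (i - 1) j :=
  stmt_13_general a b m n D D' hD hD' hA hB hAB
end
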